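/- arXiv:2312.10509 — 5 statements merged into one kernel-verified Lean document; each statement's English description precedes it below -/
import Mathlib

section
/- Let q ≥ 2 and z ∈ ℂ with z ≠ 0. Suppose complex numbers A (the vertex pairing), B (the geodesic pairing), and C (the modified edge pairing) satisfy, for every n ∈ ℕ: A = B·((1 − z⁻²)·Σ_{j=0}^{n−1}(q/z²)ʲ + (q/z²)ⁿ) + (q/z²)ⁿ·C, together with B = A − C. Then (z² − q)·A = (z² − 1)·B. -/
/-! Only the instance `n = 1` is needed: with `C = A - B` it reads
`A = (1 - z⁻²) B + (q / z²) A`, and clearing the denominator `z²` gives the claim. -/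

theorem pairing_formula_algebraic_core_general
    (q : ℕ) (z : ℂ) (hz : z ≠ 0) (A B C : ℂ)
    (h : ∀ n : ℕ,
      A = B * ((1 - (z ^ 2)⁻¹) * ∑ j ∈ Finset.range n, ((q : ℂ) / z ^ 2) ^ j
            + ((q : ℂ) / z ^ 2) ^ n)
          + ((q : ℂ) / z ^ 2) ^ n * C)
    (hBC : B = A - C) :
    (z ^ 2 - (q : ℂ)) * A = (z ^ 2 - 1) * B := by
  have h₁ : A = B * ((1 - (z ^ 2)⁻¹) + (q : ℂ) / z ^ 2) + (q : ℂ) / z ^ 2 * (A - B) := by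
    simpa only [Finset.sum_range_one, pow_zero, mul_one, pow_one, hBC, sub_sub_cancel]
      using h 1
  have hz₂ : z ^ 2 ≠ 0 := pow_ne_zero 2 hz
  field_simp at h₁
  linear_combination h₁

/-- Algebraic core of the pairing formula: if `A = B·((1 − z⁻²)·Σ_{j<n}(q/z²)ʲ + (q/z²)ⁿ)
+ (q/z²)ⁿ·C` holds for all `n` and `B = A − C`, then `(z² − q)·A = (z² − 1)·B`. -/
theorem pairing_formula_algebraic_core
    (q : ℕ) (hq : 2 ≤ q) (z : ℂ) (hz : z ≠ 0) (A B C : ℂ)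
    (h : ∀ n : ℕ,
      A = B * ((1 - (z ^ 2)⁻¹) * ∑ j ∈ Finset.range n, ((q : ℂ) / z ^ 2) ^ j
            + ((q : ℂ) / z ^ 2) ^ n)
          + ((q : ℂ) / z ^ 2) ^ n * C)
    (hBC : B = A - C) :
    (z ^ 2 - (q : ℂ)) * A = (z ^ 2 - 1) * B :=
  pairing_formula_algebraic_core_general q z hz A B C h hBC
end

section
/- Let 𝔊 be a finite (q+1)-regular graph with shift spaces 𝔓⁺ (one-sided non-backtracking edge chains) and 𝔓⁻, and transfer operators ℒ₊, ℒ₋ acting on locally constant functions as in the definitions. Then the dual operators are adjoint with respect to the geodesic pairing: ⟨ℒ₊′u₊, u₋⟩_geod = ⟨u₊, ℒ₋′u₋⟩_geod for all distributions u₊ ∈ 𝒟′(𝔓⁺), u₋ ∈ 𝒟′(𝔓⁻). In particular, if u₊, u₋ are (co)resonant states for distinct eigenvalues z₁ ≠ z₂, then ⟨u₊, u₋⟩_geod = 0. -/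
open scoped Classical

/-! Framework: one-sided shift spaces of non-backtracking edge chains on a finite
`(q+1)`-regular graph, transfer operators, distributions, and pairings.

A forward chain `(e₁, e₂, …) ∈ 𝔓⁺` is encoded by its vertex sequence
`c : ℕ → V` with `e_{i+1} = (c i, c (i+1))`; then `π₊(c) = c 0` and the first edge is
`(c 0, c 1)`.  A backward chain `(…, e₂, e₁) ∈ 𝔓⁻` is encoded by the vertex sequence
`c : ℕ → V` read away from its terminal vertex, i.e. `e_i = (c i, c (i-1))`; then
`π₋(c) = c 0` and its last edge is `(c 1, c 0)`. With these conventions both shift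
spaces are encoded by the same type of non-backtracking vertex sequences, and both
transfer operators are given by the same formula (extension by one edge at `c 0`). -/

/-- A non-backtracking infinite chain of concatenated edges, as a vertex sequence. -/
def IsEdgeChain {V : Type} (G : SimpleGraph V) (c : ℕ → V) : Prop :=
  (∀ i, G.Adj (c i) (c (i + 1))) ∧ ∀ i, c (i + 2) ≠ c i

/-- The shift space of non-backtracking chains. -/
abbrev ChainSp {V : Type} (G : SimpleGraph V) : Type := {c : ℕ → V // IsEdgeChain G c}

/-- Extending a chain by a new vertex `v` at the front. -/
def consChain {V : Type} {G : SimpleGraph V} (v : V) (c : ChainSp G)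
    (h1 : G.Adj v (c.1 0)) (h2 : c.1 1 ≠ v) : ChainSp G :=
  ⟨fun i => Nat.casesOn i v fun j => c.1 j, by
    constructor
    · intro i
      cases i with
      | zero => exact h1
      | succ j => exact c.2.1 j
    · intro i
      cases i with
      | zero => exact h2
      | succ j => exact c.2.2 j⟩

/-- The space `C^lc(𝔓)` of locally constant functions: on the compact shift space of a
finite graph these are exactly the functions depending on finitely many initial
coordinates. -/
noncomputable def lcSub {V : Type} (G : SimpleGraph V) : Submodule ℂ (ChainSp G → ℂ) where
  carrier := {F | ∃ n : ℕ, ∀ c c' : ChainSp G, (∀ i < n, c.1 i = c'.1 i) → F c = F c'}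
  zero_mem' := ⟨0, fun _ _ _ => rfl⟩
  add_mem' := by
    rintro F F' ⟨n, hn⟩ ⟨m, hm⟩
    refine ⟨max n m, fun c c' h => ?_⟩
    simp only [Pi.add_apply]
    rw [hn c c' fun i hi => h i (lt_of_lt_of_le hi (le_max_left n m)),
      hm c c' fun i hi => h i (lt_of_lt_of_le hi (le_max_right n m))]
  smul_mem' := by
    rintro a F ⟨n, hn⟩
    refine ⟨n, fun c c' h => ?_⟩
    simp only [Pi.smul_apply]
    rw [hn c c' h]

/-- The transfer operator on functions: `(ℒF)(c) = Σ_{e₀} F(e₀, c)`, summing over all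
one-edge extensions of the chain `c` that remain non-backtracking. -/
noncomputable def transferFun {V : Type} (G : SimpleGraph V) [Fintype V]
    (F : ChainSp G → ℂ) : ChainSp G → ℂ := fun c =>
  ∑ v : V, if h : G.Adj v (c.1 0) ∧ c.1 1 ≠ v then F (consChain v c h.1 h.2) else 0

/-- The transfer operator `ℒ` as a linear endomorphism of `C^lc(𝔓)`. -/
noncomputable def transferLM {V : Type} (G : SimpleGraph V) [Fintype V] :
    lcSub G →ₗ[ℂ] lcSub G where
  toFun F := ⟨transferFun G F.1, by
    obtain ⟨n, hn⟩ := F.2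
    refine ⟨n + 2, fun c c' h => ?_⟩
    have h0 : c.1 0 = c'.1 0 := h 0 (by omega)
    have h1 : c.1 1 = c'.1 1 := h 1 (by omega)
    unfold transferFun
    refine Finset.sum_congr rfl fun v _ => ?_
    by_cases hc : G.Adj v (c.1 0) ∧ c.1 1 ≠ v
    · have hc' : G.Adj v (c'.1 0) ∧ c'.1 1 ≠ v := by rw [← h0, ← h1]; exact hc
      rw [dif_pos hc, dif_pos hc']
      refine hn _ _ fun i hi => ?_
      cases i with
      | zero => rfl
      | succ j => exact h j (by omega)
    · have hc' : ¬(G.Adj v (c'.1 0) ∧ c'.1 1 ≠ v) := by rw [← h0, ← h1]; exact hc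
      rw [dif_neg hc, dif_neg hc']⟩
  map_add' F F' := by
    apply Subtype.ext
    funext c
    simp only [Submodule.coe_add, Pi.add_apply, transferFun]
    rw [← Finset.sum_add_distrib]
    refine Finset.sum_congr rfl fun v _ => ?_
    by_cases hc : G.Adj v (c.1 0) ∧ c.1 1 ≠ v
    · rw [dif_pos hc, dif_pos hc, dif_pos hc]
    · rw [dif_neg hc, dif_neg hc, dif_neg hc]; ring
  map_smul' a F := by
    apply Subtype.ext
    funext c
    simp only [Submodule.coe_smul, Pi.smul_apply, transferFun, RingHom.id_apply,
      Finset.smul_sum]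
    refine Finset.sum_congr rfl fun v _ => ?_
    by_cases hc : G.Adj v (c.1 0) ∧ c.1 1 ≠ v
    · rw [dif_pos hc, dif_pos hc]
    · rw [dif_neg hc, dif_neg hc]; simp

/-- The space of distributions `𝒟′(𝔓)`: the algebraic dual of `C^lc(𝔓)`. -/
abbrev DistSp {V : Type} (G : SimpleGraph V) : Type := lcSub G →ₗ[ℂ] ℂ

/-- The dual transfer operator `ℒ′` on distributions. -/
noncomputable def dualTransfer {V : Type} (G : SimpleGraph V) [Fintype V]
    (u : DistSp G) : DistSp G := (u : lcSub G →ₗ[ℂ] ℂ).comp (transferLM G)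

/-- Indicator (in `C^lc`) of chains with base vertex `x`. -/
noncomputable def vtxInd {V : Type} (G : SimpleGraph V) (x : V) : lcSub G :=
  ⟨fun c => if c.1 0 = x then 1 else 0,
    ⟨1, fun c c' h => by simp only [h 0 Nat.one_pos]⟩⟩

/-- The pushforward `π±,*u : 𝔛 → ℂ`, `x ↦ ⟨u, 𝟙_{π±⁻¹(x)}⟩`. -/
noncomputable def pushVtx {V : Type} (G : SimpleGraph V) (u : DistSp G) (x : V) : ℂ :=
  u (vtxInd G x)

/-- Indicator of forward chains whose first edge is `(a, b)`. -/
noncomputable def edgeIndP {V : Type} (G : SimpleGraph V) (a b : V) : lcSub G :=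
  ⟨fun c => if c.1 0 = a ∧ c.1 1 = b then 1 else 0,
    ⟨2, fun c c' h => by simp only [h 0 (by omega : (0:ℕ) < 2), h 1 (by omega : (1:ℕ) < 2)]⟩⟩

/-- Indicator of backward chains whose last edge is `(a, b)` (so `c 1 = a`, `c 0 = b`). -/
noncomputable def edgeIndM {V : Type} (G : SimpleGraph V) (a b : V) : lcSub G :=
  ⟨fun c => if c.1 1 = a ∧ c.1 0 = b then 1 else 0,
    ⟨2, fun c c' h => by simp only [h 0 (by omega : (0:ℕ) < 2), h 1 (by omega : (1:ℕ) < 2)]⟩⟩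

/-- The vertex pairing `⟨u₊, u₋⟩_(𝔛) = Σ_{x∈𝔛} (π₊,*u₊)(x)·(π₋,*u₋)(x)`. -/
noncomputable def vertexPairing {V : Type} (G : SimpleGraph V) [Fintype V]
    (up um : DistSp G) : ℂ :=
  ∑ x : V, pushVtx G up x * pushVtx G um x

/-- The modified edge pairing `⟨u₊,u₋⟩_(op,𝔈) = Σ_{e∈𝔈} (π^𝔈₊,*u₊)(e^op)·(π^𝔈₋,*u₋)(e)`,
the sum running over the oriented edges `e = (a, b)` of `𝔊`. -/
noncomputable def modEdgePairing {V : Type} (G : SimpleGraph V) [Fintype V]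
    (up um : DistSp G) : ℂ :=
  ∑ e : {p : V × V // G.Adj p.1 p.2},
    up (edgeIndP G e.1.2 e.1.1) * um (edgeIndM G e.1.1 e.1.2)

/-- For a fixed forward chain `c₊`, the locally constant function
`c₋ ↦ 𝟙_𝔓(c₋, c₊)` on `𝔓⁻`: the pair `(c₋, c₊)` joins to a bi-infinite
non-backtracking chain iff the base vertices agree and the adjacent edges do not
backtrack. -/
noncomputable def geodInner {V : Type} (G : SimpleGraph V) (cp : ChainSp G) : lcSub G :=
  ⟨fun cm => if cm.1 0 = cp.1 0 ∧ cm.1 1 ≠ cp.1 1 then 1 else 0,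
    ⟨2, fun c c' h => by simp only [h 0 (by omega : (0:ℕ) < 2), h 1 (by omega : (1:ℕ) < 2)]⟩⟩

/-- For a fixed forward chain `c₊`, `c₋ ↦ 𝟙_{𝔓^(2)}(c₋, c₊)` (matching base vertex). -/
noncomputable def sqInner {V : Type} (G : SimpleGraph V) (cp : ChainSp G) : lcSub G :=
  ⟨fun cm => if cm.1 0 = cp.1 0 then 1 else 0,
    ⟨1, fun c c' h => by simp only [h 0 (by omega : (0:ℕ) < 1)]⟩⟩

/-- The geodesic pairing `⟨u₊, u₋⟩_geod = ⟨u₊ ⊗ u₋, 𝟙_𝔓⟩`, computed as the iterated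
evaluation `⟨u₊, c₊ ↦ ⟨u₋, 𝟙_𝔓(·, c₊)⟩⟩`. -/
noncomputable def geodPairing {V : Type} (G : SimpleGraph V)
    (up um : DistSp G) : ℂ :=
  up ⟨fun cp => um (geodInner G cp),
    ⟨2, fun c c' h => by
      refine congrArg um (Subtype.ext (funext fun cm => ?_))
      show (if cm.1 0 = c.1 0 ∧ cm.1 1 ≠ c.1 1 then (1:ℂ) else 0)
          = if cm.1 0 = c'.1 0 ∧ cm.1 1 ≠ c'.1 1 then 1 else 0
      rw [h 0 (by omega), h 1 (by omega)]⟩⟩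

/-- The pairing `⟨u₊ ⊗ u₋, 𝟙_{𝔓^(2)}⟩` over pairs of chains with common base vertex. -/
noncomputable def sqPairing {V : Type} (G : SimpleGraph V)
    (up um : DistSp G) : ℂ :=
  up ⟨fun cp => um (sqInner G cp),
    ⟨1, fun c c' h => by
      refine congrArg um (Subtype.ext (funext fun cm => ?_))
      show (if cm.1 0 = c.1 0 then (1:ℂ) else 0) = if cm.1 0 = c'.1 0 then 1 else 0
      rw [h 0 (by omega)]⟩⟩

section GeodesicPairing

variable {V : Type} {G : SimpleGraph V}

lemma geodPairing_smul_left (c : ℂ) (up um : DistSp G) :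
    geodPairing G (c • up) um = c * geodPairing G up um :=
  rfl

lemma geodPairing_smul_right (c : ℂ) (up um : DistSp G) :
    geodPairing G up (c • um) = c * geodPairing G up um := by
  rw [geodPairing, geodPairing, ← smul_eq_mul, ← map_smul]
  rfl

@[simp]
lemma geodInner_apply (cp cm : ChainSp G) :
    (geodInner G cp : ChainSp G → ℂ) cm = if cm.1 0 = cp.1 0 ∧ cm.1 1 ≠ cp.1 1 then 1 else 0 :=
  rfl

@[simp]
lemma consChain_val_zero (v : V) (c : ChainSp G) (h1 : G.Adj v (c.1 0)) (h2 : c.1 1 ≠ v) :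
    (consChain v c h1 h2).1 0 = v :=
  rfl

@[simp]
lemma consChain_val_one (v : V) (c : ChainSp G) (h1 : G.Adj v (c.1 0)) (h2 : c.1 1 ≠ v) :
    (consChain v c h1 h2).1 1 = c.1 0 :=
  rfl

variable [Fintype V]

/- Extending `c₊` by one edge and then pairing, or extending `c₋` and pairing, both detect
the same configuration: an edge between `c₋ 0` and `c₊ 0` that joins `c₋` and `c₊` into
one non-backtracking chain. -/
lemma sum_geodInner_consChain_apply (cp cm : ChainSp G) :
    (∑ v : V, if h : G.Adj v (cp.1 0) ∧ cp.1 1 ≠ v then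
        (geodInner G (consChain v cp h.1 h.2) : ChainSp G → ℂ) cm else 0)
      = if G.Adj (cm.1 0) (cp.1 0) ∧ cp.1 1 ≠ cm.1 0 ∧ cm.1 1 ≠ cp.1 0 then 1 else 0 := by
  have summand : ∀ v : V,
      (if h : G.Adj v (cp.1 0) ∧ cp.1 1 ≠ v then
        (geodInner G (consChain v cp h.1 h.2) : ChainSp G → ℂ) cm else 0)
        = if cm.1 0 = v then
            (if G.Adj v (cp.1 0) ∧ cp.1 1 ≠ v ∧ cm.1 1 ≠ cp.1 0 then 1 else 0) else 0 := by
    intro v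
    simp only [geodInner_apply, consChain_val_zero, consChain_val_one]
    split_ifs <;> grind
  simp only [summand, Finset.sum_ite_eq, Finset.mem_univ, if_true]

lemma transferFun_geodInner_apply (cp cm : ChainSp G) :
    transferFun G (geodInner G cp) cm
      = if G.Adj (cm.1 0) (cp.1 0) ∧ cp.1 1 ≠ cm.1 0 ∧ cm.1 1 ≠ cp.1 0 then 1 else 0 := by
  have summand : ∀ w : V,
      (if h : G.Adj w (cm.1 0) ∧ cm.1 1 ≠ w then
        (geodInner G cp : ChainSp G → ℂ) (consChain w cm h.1 h.2) else 0)
        = if cp.1 0 = w then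
            (if G.Adj (cm.1 0) (cp.1 0) ∧ cp.1 1 ≠ cm.1 0 ∧ cm.1 1 ≠ cp.1 0 then 1 else 0)
          else 0 := by
    intro w
    simp only [geodInner_apply, consChain_val_zero, consChain_val_one]
    split_ifs <;> grind [SimpleGraph.adj_symm]
  simp only [transferFun, summand, Finset.sum_ite_eq, Finset.mem_univ, if_true]

lemma sum_geodInner_consChain (cp : ChainSp G) :
    (∑ v : V, if h : G.Adj v (cp.1 0) ∧ cp.1 1 ≠ v then
        geodInner G (consChain v cp h.1 h.2) else 0) = transferLM G (geodInner G cp) := by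
  refine Subtype.ext (funext fun cm => ?_)
  rw [AddSubmonoidClass.coe_finsetSum, Finset.sum_apply]
  simp only [apply_dite (fun F : lcSub G => (F : ChainSp G → ℂ) cm), ZeroMemClass.coe_zero,
    Pi.zero_apply]
  exact (sum_geodInner_consChain_apply cp cm).trans (transferFun_geodInner_apply cp cm).symm

lemma transferFun_comp_apply (u : DistSp G) (f : ChainSp G → lcSub G) (c : ChainSp G) :
    transferFun G (fun c' => u (f c')) c
      = u (∑ v : V, if h : G.Adj v (c.1 0) ∧ c.1 1 ≠ v then f (consChain v c h.1 h.2) else 0) := by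
  simp only [transferFun, map_sum, apply_dite u, map_zero]

theorem geodPairing_dualTransfer (up um : DistSp G) :
    geodPairing G (dualTransfer G up) um = geodPairing G up (dualTransfer G um) := by
  refine congrArg up (Subtype.ext (funext fun cp => ?_))
  show transferFun G (fun c => um (geodInner G c)) cp = um (transferLM G (geodInner G cp))
  rw [transferFun_comp_apply, sum_geodInner_consChain]

theorem geodPairing_eq_zero_of_dualTransfer_eq_smul {z₁ z₂ : ℂ} {up um : DistSp G}
    (hup : dualTransfer G up = z₁ • up) (hum : dualTransfer G um = z₂ • um) (hne : z₁ ≠ z₂) :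
    geodPairing G up um = 0 := by
  have h := geodPairing_dualTransfer up um
  rw [hup, hum, geodPairing_smul_left, geodPairing_smul_right] at h
  by_contra hP
  exact hne (mul_right_cancel₀ hP h)

end GeodesicPairing

theorem transfer_adjoint_geodesic_pairing_general
    (V : Type) [Fintype V] (G : SimpleGraph V) :
    (∀ up um : DistSp G,
      geodPairing G (dualTransfer G up) um = geodPairing G up (dualTransfer G um)) ∧
    (∀ (z₁ z₂ : ℂ) (up um : DistSp G),
      dualTransfer G up = z₁ • up → dualTransfer G um = z₂ • um → z₁ ≠ z₂ →
      geodPairing G up um = 0) :=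
  ⟨geodPairing_dualTransfer, fun _ _ _ _ => geodPairing_eq_zero_of_dualTransfer_eq_smul⟩

/-- The dual transfer operators `ℒ₊′` and `ℒ₋′` are adjoint to each other with respect
to the geodesic pairing; in particular, (co)resonant states for distinct eigenvalues
pair to zero. -/
theorem transfer_adjoint_geodesic_pairing
    (q : ℕ) (V : Type) [Fintype V] (G : SimpleGraph V) (hconn : G.Connected)
    (hreg : G.IsRegularOfDegree (q + 1)) :
    (∀ up um : DistSp G,
      geodPairing G (dualTransfer G up) um = geodPairing G up (dualTransfer G um)) ∧
    (∀ (z₁ z₂ : ℂ) (up um : DistSp G),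
      dualTransfer G up = z₁ • up → dualTransfer G um = z₂ • um → z₁ ≠ z₂ →
      geodPairing G up um = 0) :=
  transfer_adjoint_geodesic_pairing_general V G
end

section
/- Let 𝔊 be a finite (q+1)-regular graph. For all u₊ ∈ 𝒟′(𝔓⁺) and u₋ ∈ 𝒟′(𝔓⁻): ⟨u₊, u₋⟩_geod = ⟨u₊, u₋⟩_{(𝔛)} − ⟨u₊, u₋⟩_{(op,𝔈)}, where the modified edge pairing is ⟨u₊,u₋⟩_{(op,𝔈)} = Σ_{e∈𝔈} (π^𝔈₊,*u₊)(e^op)·(π^𝔈₋,*u₋)(e). -/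
open scoped Classical

/-! For a fixed forward chain `c₊`, a backward chain `c₋` continues it to a bi-infinite
non-backtracking chain iff it ends at the base vertex of `c₊` and its last edge is not the
reverse of the first edge of `c₊`. So `𝟙_𝔓(·, c₊) = 𝟙_{π₋⁻¹(π₊ c₊)} - 𝟙_{(π^𝔈₋)⁻¹(e^op)}`, where
`e` is the first edge of `c₊`. After applying `u₋`, both terms are functions of `π₊ c₊`, resp.
of `e`, hence finite linear combinations of vertex, resp. edge, indicators on `𝔓⁺`, and
linearity of `u₊` yields the vertex pairing minus the modified edge pairing. -/

section Pairings

variable {V : Type} {G : SimpleGraph V}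

theorem geodInner_eq_vtxInd_sub_edgeIndM (cp : ChainSp G) :
    geodInner G cp = vtxInd G (cp.1 0) - edgeIndM G (cp.1 1) (cp.1 0) := by
  ext cm
  change (if cm.1 0 = cp.1 0 ∧ cm.1 1 ≠ cp.1 1 then (1 : ℂ) else 0) =
    (if cm.1 0 = cp.1 0 then 1 else 0) - if cm.1 1 = cp.1 1 ∧ cm.1 0 = cp.1 0 then 1 else 0
  by_cases h0 : cm.1 0 = cp.1 0 <;> by_cases h1 : cm.1 1 = cp.1 1 <;> simp [h0, h1]

variable [Fintype V]

theorem sum_smul_vtxInd_apply (f : V → ℂ) (c : ChainSp G) :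
    (∑ x, f x • vtxInd G x : lcSub G).1 c = f (c.1 0) := by
  rw [Submodule.coe_sum, Finset.sum_apply]
  change (∑ x, f x * if c.1 0 = x then 1 else 0) = f (c.1 0)
  simp

theorem sum_smul_edgeIndP_apply (f : V → V → ℂ) (c : ChainSp G) :
    (∑ e : {p : V × V // G.Adj p.1 p.2}, f e.1.1 e.1.2 • edgeIndP G e.1.2 e.1.1 : lcSub G).1 c =
      f (c.1 1) (c.1 0) := by
  rw [Submodule.coe_sum, Finset.sum_apply]
  change (∑ e : {p : V × V // G.Adj p.1 p.2},
    f e.1.1 e.1.2 * if c.1 0 = e.1.2 ∧ c.1 1 = e.1.1 then 1 else 0) = f (c.1 1) (c.1 0)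
  rw [Fintype.sum_eq_single ⟨(c.1 1, c.1 0), (c.2.1 0).symm⟩]
  · simp
  · rintro ⟨⟨a, b⟩, hab⟩ hne
    rw [if_neg fun h => hne (Subtype.ext (Prod.ext h.2.symm h.1.symm)), mul_zero]

theorem geodPairing_eq_apply_vtxInd_sub_edgeIndP (up um : DistSp G) :
    geodPairing G up um = up ((∑ x, um (vtxInd G x) • vtxInd G x) -
      ∑ e : {p : V × V // G.Adj p.1 p.2},
        um (edgeIndM G e.1.1 e.1.2) • edgeIndP G e.1.2 e.1.1) := by
  refine congrArg up (Subtype.ext (funext fun cp => ?_))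
  change um (geodInner G cp) = _
  rw [geodInner_eq_vtxInd_sub_edgeIndM, map_sub, Submodule.coe_sub, Pi.sub_apply,
    sum_smul_vtxInd_apply (fun x => um (vtxInd G x)),
    sum_smul_edgeIndP_apply (fun a b => um (edgeIndM G a b))]

end Pairings

theorem geodesic_pairing_eq_vertex_sub_edge_general
    (V : Type) [Fintype V] (G : SimpleGraph V)
    (up um : DistSp G) :
    geodPairing G up um = vertexPairing G up um - modEdgePairing G up um := by
  rw [geodPairing_eq_apply_vtxInd_sub_edgeIndP, map_sub, map_sum, map_sum]
  simp only [map_smul, smul_eq_mul, vertexPairing, modEdgePairing, pushVtx, mul_comm]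

/-- `⟨u₊, u₋⟩_geod = ⟨u₊, u₋⟩_(𝔛) − ⟨u₊, u₋⟩_(op,𝔈)` for all distributions. -/
theorem geodesic_pairing_eq_vertex_sub_edge
    (q : ℕ) (V : Type) [Fintype V] (G : SimpleGraph V) (hconn : G.Connected)
    (hreg : G.IsRegularOfDegree (q + 1))
    (up um : DistSp G) :
    geodPairing G up um = vertexPairing G up um - modEdgePairing G up um :=
  geodesic_pairing_eq_vertex_sub_edge_general V G up um
end

section
/- Main pairing formula: Let 𝔊 be a finite (q+1)-regular graph, z ∈ ℂ∖{0}, and let u₊ ∈ 𝒟′(𝔓⁺), u₋ ∈ 𝒟′(𝔓⁻) be resonant and coresonant states, i.e., ℒ₊′u₊ = z·u₊ and ℒ₋′u₋ = z·u₋. Then (z² − q)·⟨u₊, u₋⟩_{(𝔛)} = (z² − 1)·⟨u₊, u₋⟩_geod. -/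
open scoped Classical

section PairingAux

variable {V : Type} (G : SimpleGraph V)

lemma lc_ext {F F' : lcSub G} (h : ∀ c, F.1 c = F'.1 c) : F = F' :=
  Subtype.ext (funext h)

variable [Fintype V]

omit [Fintype V] in
lemma coe_sum_apply {ι : Type*} (s : Finset ι) (f : ι → lcSub G) (c : ChainSp G) :
    (∑ i ∈ s, f i).1 c = ∑ i ∈ s, (f i).1 c := by
  classical
  induction s using Finset.induction with
  | empty => rfl
  | insert _ _ h ih => rw [Finset.sum_insert h, Finset.sum_insert h, ← ih]; rfl

lemma transfer_vtxInd (x : V) :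
    transferLM G (vtxInd G x)
      = ∑ b ∈ G.neighborFinset x, (vtxInd G b - edgeIndP G b x) := by
  apply lc_ext
  intro c
  have hL : (transferLM G (vtxInd G x)).1 c
      = if G.Adj x (c.1 0) ∧ c.1 1 ≠ x then 1 else 0 := by
    show transferFun G (vtxInd G x).1 c = _
    unfold transferFun
    rw [Finset.sum_eq_single x]
    · by_cases h : G.Adj x (c.1 0) ∧ c.1 1 ≠ x
      · rw [dif_pos h, if_pos h]
        show (if x = x then (1:ℂ) else 0) = 1
        simp
      · rw [dif_neg h, if_neg h]
    · intro v _ hv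
      by_cases h : G.Adj v (c.1 0) ∧ c.1 1 ≠ v
      · rw [dif_pos h]
        show (if v = x then (1:ℂ) else 0) = 0
        simp [hv]
      · rw [dif_neg h]
    · intro h; exact absurd (Finset.mem_univ x) h
  rw [hL, coe_sum_apply]
  have hterm : ∀ b : V, ((vtxInd G b - edgeIndP G b x) : lcSub G).1 c
      = (if c.1 0 = b then (1:ℂ) else 0) - (if c.1 0 = b ∧ c.1 1 = x then 1 else 0) := fun b => rfl
  by_cases hadj : G.Adj x (c.1 0)
  · rw [Finset.sum_eq_single (c.1 0)]
    · rw [hterm]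
      by_cases h1 : c.1 1 = x <;> simp [hadj, h1]
    · intro b hb hbne
      rw [hterm]
      have : c.1 0 ≠ b := fun h => hbne h.symm
      simp [this]
    · intro h
      exact absurd (by simpa using hadj : c.1 0 ∈ G.neighborFinset x) h
  · rw [Finset.sum_eq_zero]
    · simp [hadj]
    · intro b hb
      rw [hterm]
      have hne : c.1 0 ≠ b := by
        rintro rfl
        exact hadj (by simpa using hb)
      simp [hne]


lemma transfer_edgeIndP {a b : V} (hab : G.Adj a b) :
    transferLM G (edgeIndP G a b) = vtxInd G b - edgeIndP G b a := by
  apply lc_ext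
  intro c
  have hL : (transferLM G (edgeIndP G a b)).1 c
      = if (G.Adj a (c.1 0) ∧ c.1 1 ≠ a) ∧ c.1 0 = b then 1 else 0 := by
    show transferFun G (edgeIndP G a b).1 c = _
    unfold transferFun
    rw [Finset.sum_eq_single a]
    · by_cases h : G.Adj a (c.1 0) ∧ c.1 1 ≠ a
      · rw [dif_pos h]
        show (if a = a ∧ c.1 0 = b then (1:ℂ) else 0) = _
        by_cases h2 : c.1 0 = b <;> simp [h, h2, hab]
      · rw [dif_neg h, if_neg fun hh => h hh.1]
    · intro v _ hv
      by_cases h : G.Adj v (c.1 0) ∧ c.1 1 ≠ v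
      · rw [dif_pos h]
        show (if v = a ∧ c.1 0 = b then (1:ℂ) else 0) = 0
        simp [hv]
      · rw [dif_neg h]
    · intro h; exact absurd (Finset.mem_univ a) h
  rw [hL]
  show _ = (if c.1 0 = b then (1:ℂ) else 0) - if c.1 0 = b ∧ c.1 1 = a then 1 else 0
  by_cases h0 : c.1 0 = b
  · have hadj : G.Adj a (c.1 0) := by rwa [h0]
    by_cases h1 : c.1 1 = a
    · simp [h0, h1]
    · simp [h0, h1, hadj, hab]
  · simp [h0]

omit [Fintype V] in
lemma edgeIndM_eq (a b : V) : edgeIndM G a b = edgeIndP G b a :=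
  lc_ext G fun c => by
    show (if c.1 1 = a ∧ c.1 0 = b then (1:ℂ) else 0)
        = if c.1 0 = b ∧ c.1 1 = a then 1 else 0
    by_cases h1 : c.1 1 = a <;> by_cases h0 : c.1 0 = b <;> simp [h0, h1]

omit [Fintype V] in
lemma sqInner_split (cp : ChainSp G) :
    sqInner G cp = geodInner G cp + edgeIndP G (cp.1 0) (cp.1 1) :=
  lc_ext G fun cm => by
    show (if cm.1 0 = cp.1 0 then (1:ℂ) else 0)
        = (if cm.1 0 = cp.1 0 ∧ cm.1 1 ≠ cp.1 1 then 1 else 0)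
          + if cm.1 0 = cp.1 0 ∧ cm.1 1 = cp.1 1 then 1 else 0
    by_cases h0 : cm.1 0 = cp.1 0 <;> by_cases h1 : cm.1 1 = cp.1 1 <;> simp [h0, h1]

lemma sum_adj (f : V → V → ℂ) :
    ∑ e : {p : V × V // G.Adj p.1 p.2}, f e.1.1 e.1.2
      = ∑ x : V, ∑ y ∈ G.neighborFinset x, f x y := by
  rw [← Finset.sum_subtype (Finset.univ.filter fun p : V × V => G.Adj p.1 p.2)
        (fun p => by simp) (fun p : V × V => f p.1 p.2)]
  rw [Finset.sum_filter, Fintype.sum_prod_type]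
  refine Finset.sum_congr rfl fun x _ => ?_
  rw [SimpleGraph.neighborFinset_eq_filter, Finset.sum_filter]

lemma sum_nbr_swap (g : V → V → ℂ) :
    ∑ x : V, ∑ y ∈ G.neighborFinset x, g x y
      = ∑ x : V, ∑ y ∈ G.neighborFinset x, g y x := by
  simp only [SimpleGraph.neighborFinset_eq_filter, Finset.sum_filter]
  rw [Finset.sum_comm]
  exact Finset.sum_congr rfl fun x _ => Finset.sum_congr rfl fun y _ => by
    rw [G.adj_comm]

lemma eig_edge {z : ℂ} {u : DistSp G}
    (heig : ∀ F : lcSub G, u (transferLM G F) = z * u F)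
    {a b : V} (hab : G.Adj a b) :
    z * u (edgeIndP G a b) = u (vtxInd G b) - u (edgeIndP G b a) := by
  rw [← heig, transfer_edgeIndP G hab, map_sub]

lemma eig_vtx {z : ℂ} {u : DistSp G}
    (heig : ∀ F : lcSub G, u (transferLM G F) = z * u F) (x : V) :
    z * u (vtxInd G x)
      = ∑ b ∈ G.neighborFinset x, (u (vtxInd G b) - u (edgeIndP G b x)) := by
  rw [← heig, transfer_vtxInd, map_sum]
  exact Finset.sum_congr rfl fun b _ => map_sub u _ _

lemma sum_edgeIndP {z : ℂ} (hz : z ≠ 0) {u : DistSp G}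
    (heig : ∀ F : lcSub G, u (transferLM G F) = z * u F) (x : V) :
    ∑ y ∈ G.neighborFinset x, u (edgeIndP G x y) = u (vtxInd G x) := by
  refine mul_left_cancel₀ hz ?_
  rw [Finset.mul_sum]
  rw [Finset.sum_congr rfl fun y hy => eig_edge G heig (by simpa using hy : G.Adj x y)]
  rw [eig_vtx G heig x]


lemma sq_eq_vertex (up um : DistSp G) :
    sqPairing G up um = ∑ x : V, um (vtxInd G x) * up (vtxInd G x) := by
  have key : ∀ A : lcSub G, (∀ cp, A.1 cp = um (sqInner G cp)) →
      up A = ∑ x : V, um (vtxInd G x) * up (vtxInd G x) := by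
    intro A hA
    have hAeq : A = ∑ x : V, um (vtxInd G x) • vtxInd G x := by
      apply lc_ext
      intro cp
      rw [hA cp, coe_sum_apply]
      have : ∀ x : V, ((um (vtxInd G x) • vtxInd G x : lcSub G)).1 cp
          = um (vtxInd G x) * (if cp.1 0 = x then 1 else 0) := fun x => rfl
      rw [Finset.sum_congr rfl fun x _ => this x]
      rw [Finset.sum_eq_single (cp.1 0)]
      · have : sqInner G cp = vtxInd G (cp.1 0) := lc_ext G fun cm => rfl
        rw [this]
        simp
      · intro x _ hx
        have : cp.1 0 ≠ x := fun h => hx h.symm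
        simp [this]
      · intro h; exact absurd (Finset.mem_univ _) h
    rw [hAeq, map_sum]
    exact Finset.sum_congr rfl fun x _ => by rw [map_smul]; rfl
  exact key _ fun cp => rfl

lemma geod_split (up um : DistSp G) :
    sqPairing G up um = geodPairing G up um
      + ∑ e : {p : V × V // G.Adj p.1 p.2},
          um (edgeIndP G e.1.1 e.1.2) * up (edgeIndP G e.1.1 e.1.2) := by
  have key : ∀ A B : lcSub G, (∀ cp, A.1 cp = um (sqInner G cp)) →
      (∀ cp, B.1 cp = um (geodInner G cp)) →
      up A = up B + ∑ e : {p : V × V // G.Adj p.1 p.2},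
          um (edgeIndP G e.1.1 e.1.2) * up (edgeIndP G e.1.1 e.1.2) := by
    intro A B hA hB
    have hAeq : A = B + ∑ e : {p : V × V // G.Adj p.1 p.2},
        um (edgeIndP G e.1.1 e.1.2) • edgeIndP G e.1.1 e.1.2 := by
      apply lc_ext
      intro cp
      have hcoe : A.1 cp = B.1 cp + (∑ e : {p : V × V // G.Adj p.1 p.2},
          um (edgeIndP G e.1.1 e.1.2) • edgeIndP G e.1.1 e.1.2).1 cp → A.1 cp
          = ((B + ∑ e : {p : V × V // G.Adj p.1 p.2},
          um (edgeIndP G e.1.1 e.1.2) • edgeIndP G e.1.1 e.1.2) : lcSub G).1 cp := fun h => h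
      apply hcoe
      rw [hA cp, hB cp, coe_sum_apply, sqInner_split G cp, map_add]
      congr 1
      have hterm : ∀ e : {p : V × V // G.Adj p.1 p.2},
          ((um (edgeIndP G e.1.1 e.1.2) • edgeIndP G e.1.1 e.1.2 : lcSub G)).1 cp
            = um (edgeIndP G e.1.1 e.1.2)
              * (if cp.1 0 = e.1.1 ∧ cp.1 1 = e.1.2 then 1 else 0) := fun e => rfl
      rw [Finset.sum_congr rfl fun e _ => hterm e]
      rw [Finset.sum_eq_single (⟨(cp.1 0, cp.1 1), cp.2.1 0⟩ :
          {p : V × V // G.Adj p.1 p.2})]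
      · simp
      · intro e _ he
        have : ¬(cp.1 0 = e.1.1 ∧ cp.1 1 = e.1.2) := by
          rintro ⟨h1, h2⟩
          exact he (Subtype.ext (Prod.ext h1.symm h2.symm))
        simp [this]
      · intro h; exact absurd (Finset.mem_univ _) h
    rw [hAeq, map_add, map_sum]
    congr 1
    exact Finset.sum_congr rfl fun e _ => by rw [map_smul]; rfl
  exact key _ _ (fun cp => rfl) (fun cp => rfl)

lemma modEdge_eq (up um : DistSp G) :
    modEdgePairing G up um
      = ∑ x : V, ∑ y ∈ G.neighborFinset x,
          up (edgeIndP G y x) * um (edgeIndP G y x) := by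
  unfold modEdgePairing
  rw [← sum_adj G fun a b => up (edgeIndP G b a) * um (edgeIndP G b a)]
  exact Finset.sum_congr rfl fun e _ => by rw [edgeIndM_eq]

end PairingAux
/-- Main pairing formula: for a finite `(q+1)`-regular graph, `z ≠ 0`, a resonant
state `u₊` and a coresonant state `u₋` for the resonance `z` (that is, `ℒ₊′u₊ = z·u₊`
and `ℒ₋′u₋ = z·u₋`), one has `(z² − q)·⟨u₊, u₋⟩_(𝔛) = (z² − 1)·⟨u₊, u₋⟩_geod`. -/
theorem pairing_formula
    (q : ℕ) (V : Type) [Fintype V] (G : SimpleGraph V) (hconn : G.Connected)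
    (hreg : G.IsRegularOfDegree (q + 1))
    (z : ℂ) (hz : z ≠ 0) (up um : DistSp G)
    (hup : dualTransfer G up = z • up)
    (hum : dualTransfer G um = z • um) :
    (z ^ 2 - (q : ℂ)) * vertexPairing G up um
      = (z ^ 2 - 1) * geodPairing G up um := by
  classical
  have hup' : ∀ F : lcSub G, up (transferLM G F) = z * up F := fun F => by
    have h := LinearMap.congr_fun hup F
    simpa [dualTransfer] using h
  have hum' : ∀ F : lcSub G, um (transferLM G F) = z * um F := fun F => by
    have h := LinearMap.congr_fun hum F
    simpa [dualTransfer] using h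
  set X : ℂ := ∑ x : V, up (vtxInd G x) * um (vtxInd G x) with hX
  set E : ℂ := ∑ x : V, ∑ y ∈ G.neighborFinset x,
      up (edgeIndP G y x) * um (edgeIndP G y x) with hE
  -- vertexPairing is X
  have hvp : vertexPairing G up um = X := rfl
  -- modEdgePairing is E
  have hme : modEdgePairing G up um = E := modEdge_eq G up um
  -- sqPairing = X
  have hsq : sqPairing G up um = X := by
    rw [sq_eq_vertex G up um, hX]
    exact Finset.sum_congr rfl fun x _ => mul_comm _ _
  -- geodPairing = X - E
  have hgeod : geodPairing G up um = X - E := by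
    have h := geod_split G up um
    rw [hsq] at h
    have h2 : (∑ e : {p : V × V // G.Adj p.1 p.2},
        um (edgeIndP G e.1.1 e.1.2) * up (edgeIndP G e.1.1 e.1.2)) = E := by
      rw [sum_adj G fun a b => um (edgeIndP G a b) * up (edgeIndP G a b)]
      rw [sum_nbr_swap G fun a b => um (edgeIndP G a b) * up (edgeIndP G a b)]
      rw [hE]
      exact Finset.sum_congr rfl fun x _ => Finset.sum_congr rfl fun y _ => mul_comm _ _
    rw [h2] at h
    linear_combination -h
  -- key identity: z^2 * E = (q - 1) * X + E
  have hkey : z ^ 2 * E = ((q : ℂ) - 1) * X + E := by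
    have hx : ∀ x : V,
        z ^ 2 * ∑ y ∈ G.neighborFinset x, up (edgeIndP G y x) * um (edgeIndP G y x)
          = ((q : ℂ) - 1) * (up (vtxInd G x) * um (vtxInd G x))
            + ∑ y ∈ G.neighborFinset x, up (edgeIndP G x y) * um (edgeIndP G x y) := by
      intro x
      have expand : ∀ y ∈ G.neighborFinset x,
          z ^ 2 * (up (edgeIndP G y x) * um (edgeIndP G y x))
            = up (vtxInd G x) * um (vtxInd G x)
              - up (vtxInd G x) * um (edgeIndP G x y)
              - up (edgeIndP G x y) * um (vtxInd G x)
              + up (edgeIndP G x y) * um (edgeIndP G x y) := by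
        intro y hy
        have hxy : G.Adj x y := by simpa using hy
        have h1 := eig_edge G hup' hxy.symm
        have h2 := eig_edge G hum' hxy.symm
        calc z ^ 2 * (up (edgeIndP G y x) * um (edgeIndP G y x))
            = (z * up (edgeIndP G y x)) * (z * um (edgeIndP G y x)) := by ring
          _ = (up (vtxInd G x) - up (edgeIndP G x y))
              * (um (vtxInd G x) - um (edgeIndP G x y)) := by rw [h1, h2]
          _ = _ := by ring
      rw [Finset.mul_sum, Finset.sum_congr rfl expand]
      simp only [Finset.sum_add_distrib, Finset.sum_sub_distrib, Finset.sum_const,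
        ← Finset.mul_sum, ← Finset.sum_mul]
      rw [sum_edgeIndP G hz hup' x, sum_edgeIndP G hz hum' x]
      have hcard : (G.neighborFinset x).card = q + 1 := hreg x
      rw [hcard, nsmul_eq_mul]
      push_cast
      ring
    rw [hE, Finset.mul_sum, Finset.sum_congr rfl fun x _ => hx x]
    rw [Finset.sum_add_distrib, ← Finset.mul_sum, ← hX]
    congr 1
    rw [sum_nbr_swap G fun a b => up (edgeIndP G a b) * um (edgeIndP G a b)]
  rw [hvp, hgeod]
  linear_combination hkey
end

section
/- With G, K, B_{ω±}, τ as in the Iwasawa setup for a (q+1)-regular tree: if k·u·τʲ = k′·u′·τ^{j′} with k,k′ ∈ K, u,u′ ∈ B_{ω₊}, j,j′ ∈ ℤ, then j = j′ and there exists b ∈ K ∩ B_{ω₊} with k = k′b⁻¹ and u = b·u′. In particular the product k·u ∈ G is uniquely determined by the group element. -/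
def IsRay {V : Type} (G : SimpleGraph V) (f : ℕ → V) : Prop :=
  (∀ i, G.Adj (f i) (f (i + 1))) ∧ ∀ i, f (i + 2) ≠ f i

def RayEquiv {V : Type} (f g : ℕ → V) : Prop :=
  ∃ m n : ℕ, ∀ i, f (m + i) = g (n + i)

def Boundary {V : Type} (G : SimpleGraph V) : Type :=
  Quot (fun f g : {f : ℕ → V // IsRay G f} => RayEquiv f.1 g.1)

def Boundary.map {V : Type} {G : SimpleGraph V} (e : G ≃g G) :
    Boundary G → Boundary G :=
  Quot.map
    (fun f => ⟨fun i => e (f.1 i),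
      ⟨fun i => e.map_adj_iff.mpr (f.2.1 i),
       fun i h => f.2.2 i (e.toEquiv.injective h)⟩⟩)
    (fun _ _ h => by
      obtain ⟨m, n, hmn⟩ := h
      exact ⟨m, n, fun i => congrArg e (hmn i)⟩)

namespace IwasawaAuxProof

open SimpleGraph

variable {V : Type} {G : SimpleGraph V}

lemma nodup_map_inj {α : Type*} {f : ℕ → α} {n : ℕ}
    (h : ((List.range n).map f).Nodup) {i j : ℕ} (hi : i < n) (hj : j < n)
    (hf : f i = f j) : i = j := by
  by_contra hne
  have h2 : (List.range n).Pairwise fun a b => f a ≠ f b := by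
    rw [List.Nodup, List.pairwise_map] at h; exact h
  have hsym : Symmetric fun a b : ℕ => f a ≠ f b := fun a b hab e => hab e.symm
  exact (haveI : Std.Symm (fun a b : ℕ => f a ≠ f b) := ⟨fun a b h => hsym h⟩
    h2.forall (List.mem_range.mpr hi) (List.mem_range.mpr hj) hne hf)

/-- The canonical walk along `ℓ` from `ℓ a` to `ℓ (a + n)`. -/
def seg (ℓ : ℤ → V) (hadj : ∀ j : ℤ, G.Adj (ℓ j) (ℓ (j + 1))) :
    (n : ℕ) → (a : ℤ) → G.Walk (ℓ a) (ℓ (a + n))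
  | 0, a => Walk.nil.copy rfl (congrArg ℓ (by push_cast; ring))
  | n + 1, a =>
    (Walk.cons (hadj a) (seg ℓ hadj n (a + 1))).copy rfl (congrArg ℓ (by push_cast; ring))

lemma seg_support (ℓ : ℤ → V) (hadj : ∀ j : ℤ, G.Adj (ℓ j) (ℓ (j + 1))) :
    ∀ (n : ℕ) (a : ℤ),
      (seg ℓ hadj n a).support = (List.range (n + 1)).map fun t : ℕ => ℓ (a + t)
  | 0, a => by simp [seg, List.range_succ]
  | n + 1, a => by
    rw [seg, Walk.support_copy, Walk.support_cons, seg_support ℓ hadj n (a + 1)]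
    conv_rhs => rw [List.range_succ_eq_map]
    simp only [List.map_cons, List.map_map]
    congr 1
    · norm_num
    · apply List.map_congr_left
      intro t _
      simp only [Function.comp]
      congr 1
      push_cast
      ring

lemma seg_edges (ℓ : ℤ → V) (hadj : ∀ j : ℤ, G.Adj (ℓ j) (ℓ (j + 1))) :
    ∀ (n : ℕ) (a : ℤ),
      (seg ℓ hadj n a).edges = (List.range n).map fun t : ℕ => s(ℓ (a + t), ℓ (a + t + 1))
  | 0, a => by simp [seg]
  | n + 1, a => by
    rw [seg, Walk.edges_copy, Walk.edges_cons, seg_edges ℓ hadj n (a + 1)]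
    conv_rhs => rw [List.range_succ_eq_map]
    simp only [List.map_cons, List.map_map]
    congr 1
    · norm_num
    · apply List.map_congr_left
      intro t _
      simp only [Function.comp]
      congr 2 <;> · push_cast; ring

lemma seg_isPath (ℓ : ℤ → V) (hadj : ∀ j : ℤ, G.Adj (ℓ j) (ℓ (j + 1)))
    (hnb : ∀ j : ℤ, ℓ (j + 2) ≠ ℓ j) (hac : G.IsAcyclic) :
    ∀ (n : ℕ) (a : ℤ), (seg ℓ hadj n a).IsPath := by
  intro n
  induction n using Nat.strong_induction_on with
  | _ n IH =>
    match n with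
    | 0 => intro a; simp [seg]
    | n + 1 =>
      intro a
      rw [seg, Walk.isPath_copy, Walk.cons_isPath_iff]
      refine ⟨IH n (by omega) _, ?_⟩
      rw [seg_support]
      intro hmem
      simp only [List.mem_map, List.mem_range] at hmem
      obtain ⟨t, ht, hteq⟩ := hmem
      -- hteq : ℓ (a + 1 + t) = ℓ a
      match t with
      | 0 =>
        have : ℓ (a + 1) = ℓ a := by simpa using hteq
        exact (hadj a).ne this.symm
      | 1 =>
        have : ℓ (a + 2) = ℓ a := by
          have : (a + 1 + ((1 : ℕ) : ℤ)) = a + 2 := by push_cast; ring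
          rwa [this] at hteq
        exact hnb a this
      | t + 2 =>
        -- build a cycle
        have hpath : (seg ℓ hadj (t + 2) (a + 1)).IsPath := IH (t + 2) (by omega) (a + 1)
        have hnd := hpath.support_nodup
        rw [seg_support] at hnd
        have hdist : ∀ {i j : ℕ}, i < t + 3 → j < t + 3 →
            ℓ (a + 1 + i) = ℓ (a + 1 + j) → i = j := fun hi hj hf =>
          nodup_map_inj hnd hi hj hf
        set p : G.Walk (ℓ (a + 1)) (ℓ a) :=
          (seg ℓ hadj (t + 2) (a + 1)).copy rfl hteq with hp
        have hc : (Walk.cons (hadj a) p).IsCycle := by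
          rw [Walk.cons_isCycle_iff]
          constructor
          · rw [hp, Walk.isPath_copy]; exact hpath
          · rw [hp, Walk.edges_copy, seg_edges]
            intro hmem2
            simp only [List.mem_map, List.mem_range] at hmem2
            obtain ⟨s', hs', hseq⟩ := hmem2
            rw [Sym2.eq_iff] at hseq
            rcases hseq with ⟨h1, _⟩ | ⟨h1, h2⟩
            · -- ℓ (a+1+s') = ℓ a = ℓ (a+1+(t+2)) with s' < t+2
              have : (s' : ℕ) = t + 2 := hdist (by omega) (by omega) (h1.trans hteq.symm)
              omega
            · -- ℓ (a+1+s') = ℓ (a+1) and ℓ (a+1+s'+1) = ℓ a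
              have hs0 : s' = 0 := by
                have h3 : ℓ (a + 1 + (s' : ℤ)) = ℓ (a + 1 + ((0 : ℕ) : ℤ)) := by
                  simpa using h1
                exact hdist (by omega) (by omega) h3
              subst hs0
              have h4 : ℓ (a + 2) = ℓ a := by
                have : (a + 1 + ((0 : ℕ) : ℤ) + 1) = a + 2 := by push_cast; ring
                rwa [this] at h2
              exact hnb a h4
        exact hac _ hc

lemma ell_injective (hT : G.IsTree) (ℓ : ℤ → V) (hadj : ∀ j : ℤ, G.Adj (ℓ j) (ℓ (j + 1)))
    (hnb : ∀ j : ℤ, ℓ (j + 2) ≠ ℓ j) : Function.Injective ℓ := by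
  have key : ∀ a b : ℤ, a < b → ℓ a = ℓ b → False := by
    intro a b hab he
    set n := (b - a).toNat with hn
    have hn' : b = a + (n : ℤ) := by omega
    have hpath := seg_isPath ℓ hadj hnb hT.IsAcyclic n a
    have hnd := hpath.support_nodup
    rw [seg_support] at hnd
    have h0 : ℓ (a + ((0 : ℕ) : ℤ)) = ℓ (a + (n : ℤ)) := by
      simpa [← hn'] using he
    have := nodup_map_inj hnd (i := 0) (j := n) (by omega) (by omega) h0
    omega
  intro a b he
  rcases lt_trichotomy a b with h | h | h
  · exact (key a b h he).elim
  · exact h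
  · exact (key b a h he.symm).elim

lemma ball_finite (hlf : G.LocallyFinite) (x : V) :
    ∀ L : ℕ, {y | ∃ w : G.Walk y x, w.length ≤ L}.Finite
  | 0 => by
    apply Set.Finite.subset (Set.finite_singleton x)
    rintro y ⟨w, hw⟩
    have := Walk.eq_of_length_eq_zero (Nat.le_zero.mp hw)
    simp [this]
  | L + 1 => by
    have hfin : ({y | ∃ w : G.Walk y x, w.length ≤ L} ∪
        ⋃ z ∈ {y | ∃ w : G.Walk y x, w.length ≤ L}, G.neighborSet z).Finite := by
      refine (ball_finite hlf x L).union ((ball_finite hlf x L).biUnion fun z _ => ?_)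
      have := hlf z
      exact (G.neighborSet z).toFinite
    apply Set.Finite.subset hfin
    rintro y ⟨w, hw⟩
    cases w with
    | nil => exact Or.inl ⟨Walk.nil, by simp⟩
    | @cons _ z _ h q =>
      refine Or.inr (Set.mem_biUnion ⟨q, ?_⟩ h.symm)
      simpa using Nat.succ_le_succ_iff.mp (by simpa using hw)

lemma fixtail_aux (hconn : G.Connected) (hlf : G.LocallyFinite) {ℓ : ℤ → V}
    (hinj : Function.Injective ℓ) (e : G ≃g G) (x : V) (hx : e x = x)
    (m n : ℤ) (h : ∀ i : ℕ, e (ℓ (m + i)) = ℓ (n + i)) (hmn : m < n) : False := by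
  set pn := (n - m).toNat with hpn
  have hpn1 : 1 ≤ pn := by omega
  have hnm : n = m + (pn : ℤ) := by omega
  obtain ⟨w0⟩ := hconn.preconnected x (ℓ m)
  set L := w0.length with hL
  have step : ∀ r : ℕ, ∃ w : G.Walk x (ℓ (m + ((r * pn : ℕ) : ℤ))), w.length = L := by
    intro r
    induction r with
    | zero =>
      exact ⟨w0.copy rfl (congrArg ℓ (by push_cast; ring)), by rw [Walk.length_copy]⟩
    | succ r IH =>
      obtain ⟨w, hw⟩ := IH
      have he2 : e (ℓ (m + ((r * pn : ℕ) : ℤ))) = ℓ (m + (((r + 1) * pn : ℕ) : ℤ)) := by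
        have h1 := h (r * pn)
        rw [h1]
        congr 1
        push_cast [add_mul]
        omega
      refine ⟨(w.map e.toHom).copy (by simpa using hx) (by simpa using he2), ?_⟩
      rw [Walk.length_copy, Walk.length_map, hw]
  have hmem : ∀ r : ℕ, ℓ (m + ((r * pn : ℕ) : ℤ)) ∈ {y | ∃ w : G.Walk y x, w.length ≤ L} := by
    intro r
    obtain ⟨w, hw⟩ := step r
    exact ⟨w.reverse, by rw [Walk.length_reverse]; omega⟩
  have hinj2 : Function.Injective fun r : ℕ => ℓ (m + ((r * pn : ℕ) : ℤ)) := by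
    intro r r' hh
    have h1 := hinj hh
    have h2 : r * pn = r' * pn := by omega
    exact Nat.eq_of_mul_eq_mul_right (by omega) h2
  exact Set.infinite_of_injective_forall_mem hinj2 hmem (ball_finite hlf x L)

lemma fixtail (hconn : G.Connected) (hlf : G.LocallyFinite) {ℓ : ℤ → V}
    (hinj : Function.Injective ℓ) (e : G ≃g G) (x : V) (hx : e x = x)
    (m n : ℤ) (h : ∀ i : ℕ, e (ℓ (m + i)) = ℓ (n + i)) : m = n := by
  rcases lt_trichotomy m n with hlt | heq | hgt
  · exact (fixtail_aux hconn hlf hinj e x hx m n h hlt).elim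
  · exact heq
  · refine (fixtail_aux hconn hlf hinj e⁻¹ x ?_ n m ?_ hgt).elim
    · calc e⁻¹ x = e⁻¹ (e x) := by rw [hx]
        _ = x := RelIso.inv_apply_self e x
    · intro i
      rw [← h i, RelIso.inv_apply_self]

lemma rayEquiv_equivalence (G : SimpleGraph V) :
    Equivalence (fun f g : {f : ℕ → V // IsRay G f} => RayEquiv f.1 g.1) := by
  constructor
  · intro f; exact ⟨0, 0, fun i => rfl⟩
  · rintro f g ⟨m, n, h⟩; exact ⟨n, m, fun i => (h i).symm⟩
  · rintro f g h ⟨m₁, n₁, h1⟩ ⟨m₂, n₂, h2⟩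
    refine ⟨m₁ + (max n₁ m₂ - n₁), n₂ + (max n₁ m₂ - m₂), fun i => ?_⟩
    calc f.1 (m₁ + (max n₁ m₂ - n₁) + i)
        = f.1 (m₁ + (max n₁ m₂ - n₁ + i)) := congrArg _ (by omega)
      _ = g.1 (n₁ + (max n₁ m₂ - n₁ + i)) := h1 _
      _ = g.1 (m₂ + (max n₁ m₂ - m₂ + i)) := congrArg _ (by omega)
      _ = h.1 (n₂ + (max n₁ m₂ - m₂ + i)) := h2 _
      _ = h.1 (n₂ + (max n₁ m₂ - m₂) + i) := congrArg _ (by omega)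

end IwasawaAuxProof

open IwasawaAuxProof in
/-- Uniqueness in the decomposition `G = K·B_{ω₊}·⟨τ⟩`: if `k·u·τʲ = k′·u′·τ^{j′}` with
`k, k′ ∈ K = Stab_G(o)` and `u, u′ ∈ B_{ω₊}`, then `j = j′` and there is
`b ∈ K ∩ B_{ω₊}` with `k = k′·b⁻¹` and `u = b·u′`; in particular the product `k·u` is
uniquely determined. -/
theorem iwasawa_KNA_uniqueness
    (q : ℕ) (V : Type) (G : SimpleGraph V)
    (hT : G.IsTree) [G.LocallyFinite] (hreg : G.IsRegularOfDegree (q + 1))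
    (ℓ : ℤ → V) (hadj : ∀ j : ℤ, G.Adj (ℓ j) (ℓ (j + 1)))
    (hnb : ∀ j : ℤ, ℓ (j + 2) ≠ ℓ j)
    (o : V) (ho : ℓ 0 = o)
    (hfray : IsRay G fun i : ℕ => ℓ (i : ℤ))
    (τ : G ≃g G) (hτ : ∀ j : ℤ, τ (ℓ j) = ℓ (j + 1))
    (u u' k k' : G ≃g G) (j j' : ℤ)
    (hu : Boundary.map u (Quot.mk _ ⟨_, hfray⟩) = Quot.mk _ ⟨_, hfray⟩ ∧ ∃ x, u x = x)
    (hu' : Boundary.map u' (Quot.mk _ ⟨_, hfray⟩) = Quot.mk _ ⟨_, hfray⟩ ∧ ∃ x, u' x = x)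
    (hk : k o = o) (hk' : k' o = o)
    (heq : k * u * τ ^ j = k' * u' * τ ^ j') :
    j = j' ∧ ∃ b : G ≃g G,
      (b o = o ∧
        Boundary.map b (Quot.mk _ ⟨_, hfray⟩) = Quot.mk _ ⟨_, hfray⟩ ∧ ∃ x, b x = x) ∧
      k = k' * b⁻¹ ∧ u = b * u' := by
  have hlf : G.LocallyFinite := ‹_›
  have hconn := hT.isConnected
  have hinj : Function.Injective ℓ := ell_injective hT ℓ hadj hnb
  -- τ powers act as translations on the line
  have hτz : ∀ (t s : ℤ), (τ ^ t) (ℓ s) = ℓ (s + t) := by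
    intro t
    induction t using Int.induction_on with
    | zero => intro s; simp
    | succ t IH =>
      intro s
      rw [show ((t : ℤ) + 1) = (t : ℤ) + 1 from rfl, zpow_add_one, RelIso.mul_apply,
        hτ s, IH (s + 1)]
      congr 1
      ring
    | pred t IH =>
      intro s
      have hτinv : τ⁻¹ (ℓ s) = ℓ (s - 1) := by
        have := hτ (s - 1)
        rw [sub_add_cancel] at this
        rw [← this, RelIso.inv_apply_self]
      rw [zpow_sub_one, RelIso.mul_apply, hτinv, IH (s - 1)]
      congr 1
      ring
  -- elements fixing the end and some vertex fix a tail of the line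
  have key : ∀ e : G ≃g G,
      Boundary.map e (Quot.mk _ ⟨_, hfray⟩) = Quot.mk _ ⟨_, hfray⟩ → (∃ x, e x = x) →
      ∃ M : ℤ, ∀ t : ℤ, M ≤ t → e (ℓ t) = ℓ t := by
    rintro e he ⟨x, hx⟩
    have h2 := Quot.eq.mp he
    have hrel := ((rayEquiv_equivalence G).eqvGen_iff).mp h2
    obtain ⟨m, n, hmn⟩ := hrel
    have hm : (m : ℤ) = (n : ℤ) := by
      refine fixtail hconn hlf hinj e x hx m n fun i => ?_
      have := hmn i
      push_cast at this ⊢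
      exact this
    have hmn' : m = n := by exact_mod_cast hm
    subst hmn'
    refine ⟨m, fun t ht => ?_⟩
    have h3 := hmn (t - (m : ℤ)).toNat
    have h4 : ((m + (t - (m : ℤ)).toNat : ℕ) : ℤ) = t := by push_cast; omega
    simp only [] at h3
    rw [h4] at h3
    exact h3
  obtain ⟨Mu, hMu⟩ := key u hu.1 hu.2
  obtain ⟨Mu', hMu'⟩ := key u' hu'.1 hu'.2
  -- apply the group identity pointwise on the line
  have hinvfix : ∀ g : G ≃g G, g o = o → g⁻¹ o = o := by
    intro g hg
    conv_lhs => rw [← hg]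
    exact RelIso.inv_apply_self g o
  have happ : ∀ t : ℤ, k (u (ℓ (t + j))) = k' (u' (ℓ (t + j'))) := by
    intro t
    have h1 := congrArg (fun g : G ≃g G => g (ℓ t)) heq
    simp only [RelIso.mul_apply] at h1
    rwa [hτz j t, hτz j' t] at h1
  set T : ℤ := max (Mu - j) (Mu' - j') with hT2
  have hTk : ∀ i : ℕ, k (ℓ ((T + j) + i)) = k' (ℓ ((T + j') + i)) := by
    intro i
    have h1 := happ (T + i)
    rw [hMu (T + i + j) (by have := le_max_left (Mu - j) (Mu' - j'); omega),
      hMu' (T + i + j') (by have := le_max_right (Mu - j) (Mu' - j'); omega)] at h1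
    rw [show (T + j) + (i : ℤ) = T + i + j by ring, show (T + j') + (i : ℤ) = T + i + j' by ring]
    exact h1
  have hkj : ∀ i : ℕ, (k'⁻¹ * k) (ℓ ((T + j) + i)) = ℓ ((T + j') + i) := by
    intro i
    rw [RelIso.mul_apply, hTk i, RelIso.inv_apply_self]
  have hko : (k'⁻¹ * k) o = o := by
    rw [RelIso.mul_apply, hk]
    exact hinvfix k' hk'
  have hTj : T + j = T + j' :=
    fixtail hconn hlf hinj (k'⁻¹ * k) o hko (T + j) (T + j') hkj
  have hjj : j = j' := by omega
  subst hjj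
  have h5 : k * u = k' * u' := mul_right_cancel heq
  refine ⟨rfl, k⁻¹ * k', ⟨?_, ?_, ⟨o, ?_⟩⟩, ?_, ?_⟩
  · rw [RelIso.mul_apply, hk']
    exact hinvfix k hk
  · -- boundary fixed
    have hbfix : ∀ t : ℤ, T + j ≤ t → (k⁻¹ * k') (ℓ t) = ℓ t := by
      intro t ht
      have h6 := hTk (t - (T + j)).toNat
      rw [show (T + j) + (((t - (T + j)).toNat : ℕ) : ℤ) = t by omega] at h6
      rw [RelIso.mul_apply, ← h6, RelIso.inv_apply_self]
    exact Quot.sound ⟨(T + j).toNat, (T + j).toNat,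
      fun i => hbfix (((T + j).toNat + i : ℕ) : ℤ) (by push_cast; omega)⟩
  · rw [RelIso.mul_apply, hk']
    exact hinvfix k hk
  · rw [mul_inv_rev, inv_inv, mul_inv_cancel_left]
  · rw [mul_assoc, ← h5, inv_mul_cancel_left]
end
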